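/- The period {1, φ} generates a fractal mold: the sequence F given by φ_i = ⌊log₂(i+1)⌋ + f_{⌊log₂(i+1)⌋}(i + 1 − 2^{⌊log₂(i+1)⌋}), where f is built from p = φ − 1, is a normalized ℝ-mold (in particular, it is strictly increasing and closed under addition), has granularity 2 with first period {1, φ}, and is fractal. -/

import Mathlib

/-- An `ℝ`-mold: a strictly increasing sequence of nonnegative reals starting at `0`,
whose consecutive differences become arbitrarily small, closed under addition. -/
def IsRMold (μ : ℕ → ℝ) : Prop :=
  StrictMono μ ∧ (∀ i, 0 ≤ μ i) ∧ μ 0 = 0 ∧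
    (∀ ε : ℝ, 0 < ε → ∃ n₀ : ℕ, ∀ n ≥ n₀, μ (n + 1) - μ n < ε) ∧
    (∀ i j : ℕ, ∃ k : ℕ, μ k = μ i + μ j)

/-- The `i`-th period of a (normalized) mold `μ`: elements `x` of the mold with `i ≤ x < i + 1`. -/
def period (μ : ℕ → ℝ) (i : ℕ) : Set ℝ :=
  {x | (∃ k, μ k = x) ∧ (i : ℝ) ≤ x ∧ x < (i : ℝ) + 1}

/-- A normalized mold is fractal if its periods can be enumerated as
`π_i = {i + τ^{(i)}_0, …, i + τ^{(i)}_{l_i - 1}}` with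
`0 = τ^{(i)}_0 < ⋯ < τ^{(i)}_{l_i - 1} < τ^{(i)}_{l_i} = 1`, and each period is obtained by
dividing each interval of the previous one in the same proportions as the first period divides
`[0, 1]`:
`π_{i+1} = ⋃_{r < l_i} ⋃_{s < l} {(i+1) + τ^{(i)}_r + τ^{(1)}_s (τ^{(i)}_{r+1} - τ^{(i)}_r)}`. -/
def IsFractal (μ : ℕ → ℝ) : Prop :=
  ∃ (l : ℕ → ℕ) (τ : ℕ → ℕ → ℝ),
    (∀ i, 0 < l i) ∧
    (∀ i, τ i 0 = 0) ∧
    (∀ i, τ i (l i) = 1) ∧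
    (∀ i, ∀ r s : ℕ, r < s → s ≤ l i → τ i r < τ i s) ∧
    (∀ i, period μ i = {x | ∃ r < l i, x = (i : ℝ) + τ i r}) ∧
    (∀ i, period μ (i + 1) =
      {x | ∃ r < l i, ∃ s < l 1, x = ((i : ℝ) + 1) + τ i r + τ 1 s * (τ i (r + 1) - τ i r)})

/-- The golden ratio `φ = (1 + √5) / 2`. -/
noncomputable def phi : ℝ := (1 + Real.sqrt 5) / 2

/-- Given `p ∈ (0,1)` (with `q = 1 - p`), the recursively defined division functions
`f_ℓ : {0, …, 2^ℓ - 1} → [0, 1)`: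
`f₀ 0 = 0`, `f_{ℓ+1} n = p * f_ℓ n` if `n < 2^ℓ`, and `f_{ℓ+1} n = p + q * f_ℓ (n - 2^ℓ)`
otherwise. -/
noncomputable def fcut (p : ℝ) : ℕ → ℕ → ℝ
  | 0, _ => 0
  | ℓ + 1, n => if n < 2 ^ ℓ then p * fcut p ℓ n else p + (1 - p) * fcut p ℓ (n - 2 ^ ℓ)

/-- The golden fractal mold `F`:
`φ_i = ⌊log₂ (i+1)⌋ + f_{⌊log₂ (i+1)⌋} (i + 1 - 2 ^ ⌊log₂ (i+1)⌋)` with `p = φ - 1`.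
(Here `⌊log₂ (i+1)⌋ = Nat.log 2 (i+1)`.) -/
noncomputable def Fgold : ℕ → ℝ := fun i =>
  (Nat.log 2 (i + 1) : ℝ) +
    fcut (phi - 1) (Nat.log 2 (i + 1)) (i + 1 - 2 ^ Nat.log 2 (i + 1))

/-! With `p = φ - 1` one has `1 - p = p²`. The mold is `⋃ L, L + S L` with
`S L = {f_L n | n < 2 ^ L}`, and `S (L + 1) = p • S L ∪ (p + p² • S L)`. The points of `S L`,
together with `1`, are the division points of level `L`, and level `L + 1` divides each
interval of level `L` in ratio `p : 1 - p`, which is the fractal property. Closure under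
addition is the carry statement `S a + S b ⊆ S (a + b) ∪ (1 + S (a + b + 1))`, proved by
strong induction on `a + b` after splitting both summands according to the last step of the
recursion; `p + p = 1 + p³` and `p + p² = 1` are the identities that absorb the carries. -/

section CutPoints

variable {p : ℝ}

lemma fcut_zero_right (p : ℝ) (ℓ : ℕ) : fcut p ℓ 0 = 0 := by
  induction ℓ with
  | zero => rfl
  | succ ℓ ih => simp [fcut, ih]

/-- The division points `τ_0 < ⋯ < τ_{2^ℓ} = 1` of level `ℓ`. -/
noncomputable def cutPoint (p : ℝ) (ℓ n : ℕ) : ℝ := if n < 2 ^ ℓ then fcut p ℓ n else 1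

lemma cutPoint_of_lt {ℓ n : ℕ} (h : n < 2 ^ ℓ) : cutPoint p ℓ n = fcut p ℓ n := if_pos h

lemma cutPoint_of_le {ℓ n : ℕ} (h : 2 ^ ℓ ≤ n) : cutPoint p ℓ n = 1 := if_neg h.not_gt

lemma cutPoint_zero_right (p : ℝ) (ℓ : ℕ) : cutPoint p ℓ 0 = 0 := by
  rw [cutPoint_of_lt (by positivity), fcut_zero_right]

lemma cutPoint_one_one (p : ℝ) : cutPoint p 1 1 = p := by
  simp [cutPoint, fcut]

lemma cutPoint_succ_of_le {ℓ n : ℕ} (h : n ≤ 2 ^ ℓ) :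
    cutPoint p (ℓ + 1) n = p * cutPoint p ℓ n := by
  have := Nat.two_pow_pos ℓ
  rcases h.lt_or_eq with h | rfl
  · rw [cutPoint_of_lt h, cutPoint_of_lt (by omega), fcut, if_pos h]
  · rw [cutPoint_of_lt (by omega), cutPoint_of_le le_rfl, fcut, if_neg (lt_irrefl _),
      Nat.sub_self, fcut_zero_right]
    ring

lemma cutPoint_succ_of_le_of_le {ℓ n : ℕ} (h₁ : 2 ^ ℓ ≤ n) (h₂ : n ≤ 2 ^ (ℓ + 1)) :
    cutPoint p (ℓ + 1) n = p + (1 - p) * cutPoint p ℓ (n - 2 ^ ℓ) := by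
  rcases h₂.lt_or_eq with h₂ | rfl
  · rw [cutPoint_of_lt h₂, fcut, if_neg h₁.not_gt, cutPoint_of_lt (by omega)]
  · rw [cutPoint_of_le le_rfl, cutPoint_of_le (by omega)]
    ring

lemma cutPoint_succ_two_mul_add {ℓ r s : ℕ} (hr : r < 2 ^ ℓ) (hs : s < 2) :
    cutPoint p (ℓ + 1) (2 * r + s) =
      cutPoint p ℓ r + cutPoint p 1 s * (cutPoint p ℓ (r + 1) - cutPoint p ℓ r) := by
  induction ℓ generalizing r with
  | zero =>
    obtain rfl : r = 0 := by simpa using hr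
    interval_cases s <;> simp [cutPoint, fcut]
  | succ ℓ ih =>
    rcases lt_or_ge r (2 ^ ℓ) with h | h
    · rw [cutPoint_succ_of_le (by omega), ih h, cutPoint_succ_of_le h.le,
        cutPoint_succ_of_le h, cutPoint_succ_of_le (by omega)]
      ring
    · rw [cutPoint_succ_of_le_of_le (ℓ := ℓ + 1) (by omega) (by omega),
        cutPoint_succ_of_le_of_le (n := r) h (by omega),
        cutPoint_succ_of_le_of_le (n := r + 1) (by omega) (by omega),
        show 2 * r + s - 2 ^ (ℓ + 1) = 2 * (r - 2 ^ ℓ) + s by omega,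
        show r + 1 - 2 ^ ℓ = r - 2 ^ ℓ + 1 by omega, ih (by omega)]
      ring

lemma exists_cutPoint_succ_sub {ℓ n : ℕ} (h : n < 2 ^ (ℓ + 1)) :
    ∃ m < 2 ^ ℓ, ∃ c, (c = p ∨ c = 1 - p) ∧
      cutPoint p (ℓ + 1) (n + 1) - cutPoint p (ℓ + 1) n =
        c * (cutPoint p ℓ (m + 1) - cutPoint p ℓ m) := by
  rcases lt_or_ge n (2 ^ ℓ) with hn | hn
  · refine ⟨n, hn, p, .inl rfl, ?_⟩
    rw [cutPoint_succ_of_le hn, cutPoint_succ_of_le hn.le]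
    ring
  · refine ⟨n - 2 ^ ℓ, by omega, 1 - p, .inr rfl, ?_⟩
    rw [cutPoint_succ_of_le_of_le (by omega) (by omega), cutPoint_succ_of_le_of_le hn (by omega),
      show n + 1 - 2 ^ ℓ = n - 2 ^ ℓ + 1 by omega]
    ring

lemma cutPoint_lt_succ (hp₀ : 0 < p) (hp₁ : p < 1) {ℓ n : ℕ} (h : n < 2 ^ ℓ) :
    cutPoint p ℓ n < cutPoint p ℓ (n + 1) := by
  induction ℓ generalizing n with
  | zero =>
    obtain rfl : n = 0 := by simpa using h
    simp [cutPoint_zero_right, cutPoint_of_le]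
  | succ ℓ ih =>
    obtain ⟨m, hm, c, hc, hgap⟩ := exists_cutPoint_succ_sub (p := p) h
    have hc : 0 < c := by rcases hc with rfl | rfl <;> linarith
    have := mul_pos hc (sub_pos.mpr (ih hm))
    linarith

lemma cutPoint_strictMonoOn (hp₀ : 0 < p) (hp₁ : p < 1) (ℓ : ℕ) :
    StrictMonoOn (cutPoint p ℓ) (Set.Iic (2 ^ ℓ)) :=
  strictMonoOn_Iic_of_lt_succ fun _ hn => cutPoint_lt_succ hp₀ hp₁ hn

lemma cutPoint_mem_Ico (hp₀ : 0 < p) (hp₁ : p < 1) {ℓ n : ℕ} (h : n < 2 ^ ℓ) :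
    cutPoint p ℓ n ∈ Set.Ico 0 1 := by
  have hmono := cutPoint_strictMonoOn hp₀ hp₁ ℓ
  constructor
  · rw [← cutPoint_zero_right p ℓ]
    exact hmono.monotoneOn (by simp) (by simp [h.le]) (Nat.zero_le n)
  · rw [← cutPoint_of_le (p := p) (le_refl (2 ^ ℓ))]
    exact hmono (by simp [h.le]) (by simp) h

lemma cutPoint_succ_sub_le (hp₀ : 1 - p ≤ p) (hp₁ : p < 1) {ℓ n : ℕ} (h : n < 2 ^ ℓ) :
    cutPoint p ℓ (n + 1) - cutPoint p ℓ n ≤ p ^ ℓ := by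
  induction ℓ generalizing n with
  | zero =>
    obtain rfl : n = 0 := by simpa using h
    simp [cutPoint_zero_right, cutPoint_of_le]
  | succ ℓ ih =>
    obtain ⟨m, hm, c, hc, hgap⟩ := exists_cutPoint_succ_sub (p := p) h
    have hc : 0 ≤ c ∧ c ≤ p := by rcases hc with rfl | rfl <;> constructor <;> linarith
    have hgap₀ := sub_pos.mpr (cutPoint_lt_succ (by linarith) hp₁ hm)
    rw [hgap, pow_succ']
    exact mul_le_mul hc.2 (ih hm) hgap₀.le (by linarith)

end CutPoints

section CutSets

variable {p : ℝ}

def cutSet (p : ℝ) (ℓ : ℕ) : Set ℝ := {x | ∃ n < 2 ^ ℓ, cutPoint p ℓ n = x}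

lemma cutSet_zero (p : ℝ) : cutSet p 0 = {0} := by
  ext x
  simp [cutSet, cutPoint_zero_right, eq_comm]

lemma mul_mem_cutSet {ℓ : ℕ} {x : ℝ} (hx : x ∈ cutSet p ℓ) :
    p * x ∈ cutSet p (ℓ + 1) := by
  obtain ⟨n, hn, rfl⟩ := hx
  exact ⟨n, by omega, cutPoint_succ_of_le hn.le⟩

lemma add_mul_mem_cutSet {ℓ : ℕ} {x : ℝ} (hx : x ∈ cutSet p ℓ) :
    p + (1 - p) * x ∈ cutSet p (ℓ + 1) := by
  obtain ⟨n, hn, rfl⟩ := hx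
  refine ⟨2 ^ ℓ + n, by omega, ?_⟩
  rw [cutPoint_succ_of_le_of_le (by omega) (by omega), Nat.add_sub_cancel_left]

lemma mem_cutSet_succ {ℓ : ℕ} {x : ℝ} :
    x ∈ cutSet p (ℓ + 1) ↔ ∃ y ∈ cutSet p ℓ, x = p * y ∨ x = p + (1 - p) * y := by
  refine ⟨?_, ?_⟩
  · rintro ⟨n, hn, rfl⟩
    rcases lt_or_ge n (2 ^ ℓ) with h | h
    · exact ⟨_, ⟨n, h, rfl⟩, .inl (cutPoint_succ_of_le h.le)⟩
    · exact ⟨_, ⟨n - 2 ^ ℓ, by omega, rfl⟩, .inr (cutPoint_succ_of_le_of_le h hn.le)⟩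
  · rintro ⟨y, hy, rfl | rfl⟩
    exacts [mul_mem_cutSet hy, add_mul_mem_cutSet hy]

lemma cutSet_mono (p : ℝ) : Monotone (cutSet p) := by
  refine monotone_nat_of_le_succ fun ℓ x ⟨n, hn, hx⟩ => ⟨2 * n, ?_, ?_⟩
  · omega
  · simpa [cutPoint_zero_right, hx] using cutPoint_succ_two_mul_add (p := p) hn two_pos

end CutSets

section GoldenAddition

variable {p : ℝ}

/-- `m + carrySet p m` is the part of `⋃ L, L + cutSet p L` lying in `[m, m + 2)`. -/
def carrySet (p : ℝ) (m : ℕ) : Set ℝ := {v | v ∈ cutSet p m ∨ v - 1 ∈ cutSet p (m + 1)}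

lemma add_mul_mem_cutSet_or (hp : p * p = 1 - p) {m : ℕ} {x : ℝ} (hx : x ∈ cutSet p (m + 1)) :
    p + p * x ∈ cutSet p (m + 1) ∨ ∃ w ∈ cutSet p m, p + p * x = 1 + p ^ 3 * w := by
  obtain ⟨y, hy, rfl | rfl⟩ := mem_cutSet_succ.1 hx
  · left
    rw [show p + p * (p * y) = p + (1 - p) * y by linear_combination y * hp]
    exact add_mul_mem_cutSet hy
  · exact .inr ⟨y, hy, by linear_combination (1 - p * y) * hp⟩

lemma mul_mul_mem_cutSet_of_mem_carrySet (hp : p * p = 1 - p) {m : ℕ} {v : ℝ}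
    (hv : v ∈ carrySet p m) :
    p * (p * v) ∈ cutSet p (m + 3) := by
  rcases hv with hv | hv
  · exact cutSet_mono p (by omega) (mul_mem_cutSet (mul_mem_cutSet hv))
  rcases add_mul_mem_cutSet_or hp hv with h | ⟨w, hw, e⟩
  · rw [show p * (p * v) = p * (p + p * (v - 1)) by ring]
    exact cutSet_mono p (by omega) (mul_mem_cutSet h)
  · rw [show p * (p * v) = p + (1 - p) * (p * (p * w)) by
      linear_combination p * e + p ^ 2 * w * hp]
    exact add_mul_mem_cutSet (mul_mem_cutSet (mul_mem_cutSet hw))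

lemma mul_self_add_mul_mem_cutSet (hp : p * p = 1 - p) {m : ℕ} {x : ℝ} (hx : x ∈ cutSet p m) :
    p * p + p * x ∈ cutSet p (m + 2) := by
  induction m generalizing x with
  | zero =>
    rw [cutSet_zero, Set.mem_singleton_iff] at hx
    subst hx
    have hp₁ : p ∈ cutSet p 1 := by
      simpa using add_mul_mem_cutSet (p := p) ((cutSet_zero p).ge rfl)
    simpa using mul_mem_cutSet hp₁
  | succ m ih =>
    obtain ⟨y, hy, rfl | rfl⟩ := mem_cutSet_succ.1 hx
    · rw [show p * p + p * (p * y) = p * (p * (1 + y)) by ring]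
      refine mul_mul_mem_cutSet_of_mem_carrySet hp (.inr ?_)
      simpa using cutSet_mono p (by omega) hy
    · rw [show p * p + p * (p + (1 - p) * y) = p + (1 - p) * (p * p + p * y) by
        linear_combination p * hp]
      exact add_mul_mem_cutSet (ih hy)

lemma mul_add_mul_mem_carrySet (hp : p * p = 1 - p) {m : ℕ} {x y : ℝ}
    (hxy : x + y ∈ carrySet p m) : p * x + p * y ∈ carrySet p (m + 2) := by
  rcases hxy with h | h
  · exact .inl (cutSet_mono p (Nat.le_succ _) (by simpa [mul_add] using mul_mem_cutSet h))
  rcases add_mul_mem_cutSet_or hp h with h' | ⟨w, hw, e⟩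
  · exact .inl (cutSet_mono p (show m + 1 ≤ m + 2 by omega) (by convert h' using 1; ring))
  · refine .inr ?_
    rw [show p * x + p * y - 1 = p * (p * (p * w)) by linear_combination e]
    exact mul_mem_cutSet (mul_mem_cutSet (mul_mem_cutSet hw))

lemma add_mul_add_add_mul_mem_carrySet (hp : p * p = 1 - p) {m : ℕ} {x y : ℝ}
    (hxy : x + y ∈ carrySet p m) :
    p + (1 - p) * x + (p + (1 - p) * y) ∈ carrySet p (m + 2) := by
  refine .inr ?_
  rcases hxy with h | h
  · rw [show p + (1 - p) * x + (p + (1 - p) * y) - 1 = p * (p * p + p * (x + y)) by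
      linear_combination (1 - p - x - y) * hp]
    exact mul_mem_cutSet (mul_self_add_mul_mem_cutSet hp h)
  · rw [show p + (1 - p) * x + (p + (1 - p) * y) - 1 = p + (1 - p) * (x + y - 1) by ring]
    exact cutSet_mono p (by omega) (add_mul_mem_cutSet h)

lemma mul_add_add_mul_mem_carrySet (hp : p * p = 1 - p) {a b : ℕ} {x y : ℝ}
    (ih : ∀ c d, c + d < a + b + 2 →
      ∀ x ∈ cutSet p c, ∀ y ∈ cutSet p d, x + y ∈ carrySet p (c + d))
    (hx : x ∈ cutSet p a) (hy : y ∈ cutSet p b) :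
    p * x + (p + (1 - p) * y) ∈ carrySet p (a + b + 2) := by
  rcases a with _ | a
  · rw [cutSet_zero, Set.mem_singleton_iff] at hx
    subst hx
    refine .inl (cutSet_mono p (show b + 1 ≤ 0 + b + 2 by omega) ?_)
    simpa using add_mul_mem_cutSet hy
  obtain ⟨x₁, hx₁, rfl | rfl⟩ := mem_cutSet_succ.1 hx
  · rcases ih a b (by omega) x₁ hx₁ y hy with h | h
    · refine .inl (cutSet_mono p (show a + b + 1 ≤ a + 1 + b + 2 by omega) ?_)
      rw [show p * (p * x₁) + (p + (1 - p) * y) = p + (1 - p) * (x₁ + y) by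
        linear_combination x₁ * hp]
      exact add_mul_mem_cutSet h
    · refine .inr (cutSet_mono p (show a + b + 1 + 2 ≤ a + 1 + b + 2 + 1 by omega) ?_)
      rw [show p * (p * x₁) + (p + (1 - p) * y) - 1 = p * (p * (x₁ + y - 1)) by
        linear_combination (1 - y) * hp]
      exact mul_mem_cutSet (mul_mem_cutSet h)
  · refine .inr ?_
    rw [show p * (p + (1 - p) * x₁) + (p + (1 - p) * y) - 1 = p * (p * (p * x₁ + y)) by
      linear_combination (1 - y - p * x₁) * hp]
    exact mul_mul_mem_cutSet_of_mem_carrySet hp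
      (ih (a + 1) b (by omega) _ (mul_mem_cutSet hx₁) y hy)

theorem add_mem_carrySet (hp : p * p = 1 - p) {a b : ℕ} {x y : ℝ}
    (hx : x ∈ cutSet p a) (hy : y ∈ cutSet p b) : x + y ∈ carrySet p (a + b) := by
  induction h : a + b using Nat.strong_induction_on generalizing a b x y with
  | _ N ih =>
  replace ih : ∀ c d, c + d < N →
      ∀ x ∈ cutSet p c, ∀ y ∈ cutSet p d, x + y ∈ carrySet p (c + d) :=
    fun c d hcd x hx y hy => ih _ hcd hx hy rfl
  subst h
  rcases a with _ | a
  · rw [cutSet_zero, Set.mem_singleton_iff] at hx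
    exact .inl (by simpa [hx] using hy)
  rcases b with _ | b
  · rw [cutSet_zero, Set.mem_singleton_iff] at hy
    exact .inl (by simpa [hy] using hx)
  rw [show a + 1 + (b + 1) = a + b + 2 by omega] at ih ⊢
  obtain ⟨x₀, hx₀, rfl | rfl⟩ := mem_cutSet_succ.1 hx <;>
    obtain ⟨y₀, hy₀, rfl | rfl⟩ := mem_cutSet_succ.1 hy
  · exact mul_add_mul_mem_carrySet hp (ih a b (by omega) x₀ hx₀ y₀ hy₀)
  · exact mul_add_add_mul_mem_carrySet hp ih hx₀ hy₀
  · have := mul_add_add_mul_mem_carrySet hp (fun c d h => ih c d (by omega)) hy₀ hx₀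
    rwa [add_comm (p * y₀), add_comm b a] at this
  · exact add_mul_add_add_mul_mem_carrySet hp (ih a b (by omega) x₀ hx₀ y₀ hy₀)

end GoldenAddition

section GoldenMold

lemma phi_sub_one_mul_self : (phi - 1) * (phi - 1) = 1 - (phi - 1) := by
  have : phi ^ 2 = phi + 1 := Real.goldenRatio_sq
  linear_combination this

lemma phi_sub_one_pos : 0 < phi - 1 := sub_pos.2 Real.one_lt_goldenRatio

lemma phi_sub_one_lt_one : phi - 1 < 1 := by
  have : phi < 2 := Real.goldenRatio_lt_two
  linarith

lemma Fgold_two_pow_sub_one_add {L m : ℕ} (hm : m ≤ 2 ^ L) :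
    Fgold (2 ^ L - 1 + m) = L + cutPoint (phi - 1) L m := by
  have := Nat.two_pow_pos L
  rw [Fgold, show 2 ^ L - 1 + m + 1 = 2 ^ L + m by omega]
  rcases hm.lt_or_eq with hm | rfl
  · rw [Nat.log_eq_of_pow_le_of_lt_pow (m := L) (by omega) (by omega), Nat.add_sub_cancel_left,
      cutPoint_of_lt hm]
  · rw [← Nat.two_pow_succ, Nat.log_pow one_lt_two, Nat.sub_self, fcut_zero_right,
      cutPoint_of_le le_rfl]
    push_cast
    ring

lemma exists_eq_two_pow_sub_one_add (k : ℕ) : ∃ L m, m < 2 ^ L ∧ k = 2 ^ L - 1 + m := by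
  have h₁ : 2 ^ Nat.log 2 (k + 1) ≤ k + 1 := Nat.pow_log_le_self 2 (by omega)
  have h₂ : k + 1 < 2 ^ (Nat.log 2 (k + 1) + 1) := Nat.lt_pow_succ_log_self one_lt_two _
  exact ⟨Nat.log 2 (k + 1), k + 1 - 2 ^ Nat.log 2 (k + 1), by omega, by omega⟩

lemma Fgold_zero : Fgold 0 = 0 := by
  simpa [cutPoint_zero_right] using Fgold_two_pow_sub_one_add (L := 0) (m := 0) (Nat.zero_le _)

lemma Fgold_one : Fgold 1 = 1 := by
  simpa [cutPoint_zero_right] using Fgold_two_pow_sub_one_add (L := 1) (m := 0) zero_le_two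

lemma Fgold_strictMono : StrictMono Fgold := by
  refine strictMono_nat_of_lt_succ fun k => ?_
  obtain ⟨L, m, hm, rfl⟩ := exists_eq_two_pow_sub_one_add k
  rw [add_assoc, Fgold_two_pow_sub_one_add hm.le, Fgold_two_pow_sub_one_add hm]
  linarith [cutPoint_lt_succ phi_sub_one_pos phi_sub_one_lt_one hm]

lemma Fgold_succ_sub_le {L k : ℕ} (hk : 2 ^ L - 1 ≤ k) :
    Fgold (k + 1) - Fgold k ≤ (phi - 1) ^ L := by
  obtain ⟨M, m, hm, rfl⟩ := exists_eq_two_pow_sub_one_add k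
  have hLM : L ≤ M := by
    by_contra! h
    have := Nat.pow_le_pow_right two_pos h
    omega
  rw [add_assoc, Fgold_two_pow_sub_one_add hm.le, Fgold_two_pow_sub_one_add hm]
  calc _ = cutPoint (phi - 1) M (m + 1) - cutPoint (phi - 1) M m := by ring
    _ ≤ (phi - 1) ^ M := cutPoint_succ_sub_le (by nlinarith [phi_sub_one_mul_self,
          phi_sub_one_pos, phi_sub_one_lt_one]) phi_sub_one_lt_one hm
    _ ≤ (phi - 1) ^ L := pow_le_pow_of_le_one phi_sub_one_pos.le phi_sub_one_lt_one.le hLM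

lemma range_Fgold :
    Set.range Fgold = {z | ∃ L : ℕ, ∃ x ∈ cutSet (phi - 1) L, z = L + x} := by
  ext z
  constructor
  · rintro ⟨k, rfl⟩
    obtain ⟨L, m, hm, rfl⟩ := exists_eq_two_pow_sub_one_add k
    exact ⟨L, _, ⟨m, hm, rfl⟩, Fgold_two_pow_sub_one_add hm.le⟩
  · rintro ⟨L, _, ⟨m, hm, rfl⟩, rfl⟩
    exact ⟨_, Fgold_two_pow_sub_one_add hm.le⟩

lemma exists_Fgold_eq_add (i j : ℕ) : ∃ k, Fgold k = Fgold i + Fgold j := by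
  obtain ⟨a, x, hx, hi⟩ := range_Fgold.le ⟨i, rfl⟩
  obtain ⟨b, y, hy, hj⟩ := range_Fgold.le ⟨j, rfl⟩
  rcases add_mem_carrySet phi_sub_one_mul_self hx hy with h | h
  · obtain ⟨k, hk⟩ := range_Fgold.ge ⟨a + b, x + y, h, rfl⟩
    exact ⟨k, by rw [hk, hi, hj]; push_cast; ring⟩
  · obtain ⟨k, hk⟩ := range_Fgold.ge ⟨a + b + 1, x + y - 1, h, rfl⟩
    exact ⟨k, by rw [hk, hi, hj]; push_cast; ring⟩

lemma period_Fgold (i : ℕ) :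
    period Fgold i = {x | ∃ r < 2 ^ i, x = (i : ℝ) + cutPoint (phi - 1) i r} := by
  ext x
  simp only [period, Set.mem_ofPred_eq]
  constructor
  · rintro ⟨⟨k, rfl⟩, hi, hi'⟩
    obtain ⟨L, m, hm, rfl⟩ := exists_eq_two_pow_sub_one_add k
    rw [Fgold_two_pow_sub_one_add hm.le] at hi hi' ⊢
    obtain ⟨h₀, h₁⟩ := cutPoint_mem_Ico phi_sub_one_pos phi_sub_one_lt_one hm
    have hL : L < i + 1 := by exact_mod_cast (by linarith : (L : ℝ) < i + 1)
    have hL' : i < L + 1 := by exact_mod_cast (by linarith : (i : ℝ) < L + 1)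
    obtain rfl : L = i := by omega
    exact ⟨m, hm, rfl⟩
  · rintro ⟨r, hr, rfl⟩
    obtain ⟨h₀, h₁⟩ := cutPoint_mem_Ico phi_sub_one_pos phi_sub_one_lt_one hr
    exact ⟨⟨_, Fgold_two_pow_sub_one_add hr.le⟩, by linarith, by linarith⟩

lemma period_Fgold_succ (i : ℕ) :
    period Fgold (i + 1) = {x | ∃ r < 2 ^ i, ∃ s < 2 ^ 1, x = ((i : ℝ) + 1) +
      cutPoint (phi - 1) i r + cutPoint (phi - 1) 1 s *
        (cutPoint (phi - 1) i (r + 1) - cutPoint (phi - 1) i r)} := by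
  rw [period_Fgold]
  ext x
  simp only [Set.mem_ofPred_eq, pow_one]
  constructor
  · rintro ⟨n, hn, rfl⟩
    obtain ⟨r, s, hs, rfl⟩ : ∃ r s, s < 2 ∧ n = 2 * r + s :=
      ⟨n / 2, n % 2, Nat.mod_lt n two_pos, (Nat.div_add_mod n 2).symm⟩
    refine ⟨r, by omega, s, hs, ?_⟩
    rw [cutPoint_succ_two_mul_add (by omega) hs]
    push_cast
    ring
  · rintro ⟨r, hr, s, hs, rfl⟩
    refine ⟨2 * r + s, by omega, ?_⟩
    rw [cutPoint_succ_two_mul_add hr hs]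
    push_cast
    ring

lemma period_Fgold_one : period Fgold 1 = {1, phi} := by
  rw [period_Fgold]
  ext x
  simp only [Set.mem_ofPred_eq, Set.mem_insert_iff, Set.mem_singleton_iff]
  constructor
  · rintro ⟨r, hr, rfl⟩
    interval_cases r
    · simp [cutPoint_zero_right]
    · simp [cutPoint_one_one]
  · rintro (rfl | rfl)
    · exact ⟨0, by norm_num, by simp [cutPoint_zero_right]⟩
    · exact ⟨1, by norm_num, by simp [cutPoint_one_one]⟩

end GoldenMold

/-- the period `{1, φ}` generates a fractal mold: the sequence `F` is a
normalized ℝ-mold, has granularity `2` with first period `{1, φ}`, and is fractal. -/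
theorem Fgold_is_fractal_mold :
    IsRMold Fgold ∧ Fgold 1 = 1 ∧
    period Fgold 1 = {1, phi} ∧ (period Fgold 1).ncard = 2 ∧
    IsFractal Fgold := by
  refine ⟨⟨Fgold_strictMono, fun i => Fgold_zero ▸ Fgold_strictMono.monotone (Nat.zero_le i),
    Fgold_zero, fun ε hε => ?_, exists_Fgold_eq_add⟩, Fgold_one, period_Fgold_one, ?_, ?_⟩
  · obtain ⟨L, hL⟩ := exists_pow_lt_of_lt_one hε phi_sub_one_lt_one
    exact ⟨2 ^ L - 1, fun n hn => (Fgold_succ_sub_le hn).trans_lt hL⟩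
  · rw [period_Fgold_one]
    exact Set.ncard_pair (by linarith [phi_sub_one_pos])
  · exact ⟨(2 ^ ·), cutPoint (phi - 1), Nat.two_pow_pos, cutPoint_zero_right _,
      fun _ => cutPoint_of_le le_rfl,
      fun i r s hrs hs => cutPoint_strictMonoOn phi_sub_one_pos phi_sub_one_lt_one i
        (hrs.trans_le hs).le hs hrs,
      period_Fgold, period_Fgold_succ⟩
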